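/- Fix n ≥ 1, let p : 2^n → ℝ be a probability vector with all entries positive, let μ_p be the associated n-step Bernoulli measure on 2^ω, and let φ be a non-trivial n-block map. Then Avg(φ, μ_p, nk) = Avg(φ, μ_p, n) for every k ≥ 1, and Rate(φ, μ_p) = limsup_{m→∞} Avg(φ, μ_p, m) = Avg(φ, μ_p, n) = (1/n)·Σ_{σ∈2^n} p(σ)·|φ(σ)|. -/

import Mathlib

/-!
Under an `n`-step Bernoulli measure the first `n`-block of a string is independent of the rest
(`IsBlockMultiplicative`), and an `n`-block map acts blockwise. Hence the expected output length
`E(m)` on inputs of length `m` satisfies `E(n + m) = E(n) + E(m)`, while `E(m) = 0` for `m < n`.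
So `E(m) = ⌊m/n⌋ E(n)` and `Avg(φ, μ, m) = ⌊m/n⌋ / m · E(n)`, which equals `E(n)/n` when `n ∣ m`
and tends to `E(n)/n` as `m → ∞`.
-/

open Filter MeasureTheory

/-- The length-`m` initial segment of `X ∈ 2^ω`, as a finite binary string. -/
def seg (X : ℕ → Bool) (m : ℕ) : List Bool := (List.range m).map X

/-- The cylinder `⟦σ⟧` of all sequences extending the string `σ`. -/
def cyl (σ : List Bool) : Set (ℕ → Bool) := {X | seg X σ.length = σ}

/-- `μ` is the `n`-step Bernoulli measure attached to the probability vector `p`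
on `2^n`. -/
def IsNStepBernoulli (n : ℕ) (p : (Fin n → Bool) → ℝ)
    (μ : Measure (ℕ → Bool)) : Prop :=
  ∀ (k : ℕ) (σs : Fin k → (Fin n → Bool)),
    μ (cyl (List.ofFn (fun i => List.ofFn (σs i))).flatten) =
      ∏ i, ENNReal.ofReal (p (σs i))

/-- `φ` is an `n`-block map. -/
def IsNBlockMap (n : ℕ) (φ : List Bool → List Bool) : Prop :=
  ∀ (σs : List (Fin n → Bool)) (τ : List Bool), τ.length < n →
    φ ((σs.map List.ofFn).flatten ++ τ) = (σs.map (fun f => φ (List.ofFn f))).flatten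

/-- The average output/input ratio
`Avg(φ, μ, m) = (1/m) Σ_{σ ∈ 2^m} μ(⟦σ⟧) |φ(σ)|`. -/
noncomputable def Avg (φ : List Bool → List Bool) (μ : Measure (ℕ → Bool))
    (m : ℕ) : ℝ :=
  (1 / m : ℝ) *
    ∑ f : Fin m → Bool, (μ (cyl (List.ofFn f))).toReal * ((φ (List.ofFn f)).length : ℝ)

lemma seg_eq_ofFn (X : ℕ → Bool) (m : ℕ) : seg X m = List.ofFn fun i : Fin m => X i := by
  apply List.ext_getElem <;> simp [seg]

lemma seg_add (X : ℕ → Bool) (s j : ℕ) :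
    seg X (s + j) = seg X s ++ List.ofFn fun i : Fin j => X (s + i) := by
  simp only [seg, List.range_add, List.map_append, List.map_map]
  congr 1
  apply List.ext_getElem <;> simp

lemma measurableSet_cyl (σ : List Bool) : MeasurableSet (cyl σ) := by
  have : cyl σ = (fun X (i : Fin σ.length) => X i) ⁻¹' {f | List.ofFn f = σ} := by
    ext X; simp [cyl, seg_eq_ofFn]
  rw [this]
  exact (measurable_pi_lambda _ fun i => measurable_pi_apply _) (Set.to_countable _).measurableSet

lemma cyl_eq_iUnion_cyl_append (σ : List Bool) (j : ℕ) :
    cyl σ = ⋃ b : Fin j → Bool, cyl (σ ++ List.ofFn b) := by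
  ext X
  simp only [cyl, Set.mem_iUnion, Set.mem_ofPred_eq, List.length_append, List.length_ofFn, seg_add]
  constructor
  · intro h
    exact ⟨_, by rw [h]⟩
  · rintro ⟨b, h⟩
    exact (List.append_inj h (by simp [seg])).1

lemma pairwise_disjoint_cyl_append (σ : List Bool) (j : ℕ) :
    Pairwise (Function.onFun Disjoint fun b : Fin j → Bool => cyl (σ ++ List.ofFn b)) := by
  intro b b' hbb'
  refine Set.disjoint_left.2 fun X h h' => hbb' (List.ofFn_injective ?_)
  simp only [cyl, Set.mem_ofPred_eq, List.length_append, List.length_ofFn] at h h'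
  exact (List.append_inj (h.symm.trans h') rfl).2

lemma measure_cyl_eq_sum (μ : Measure (ℕ → Bool)) (σ : List Bool) (j : ℕ) :
    μ (cyl σ) = ∑ b : Fin j → Bool, μ (cyl (σ ++ List.ofFn b)) := by
  rw [cyl_eq_iUnion_cyl_append σ j, measure_iUnion (pairwise_disjoint_cyl_append σ j)
    fun b => measurableSet_cyl _, tsum_fintype]

lemma sum_measureReal_cyl_ofFn (μ : Measure (ℕ → Bool)) [IsProbabilityMeasure μ] (m : ℕ) :
    ∑ b : Fin m → Bool, (μ (cyl (List.ofFn b))).toReal = 1 := by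
  have hcyl : cyl [] = Set.univ := by ext X; simp [cyl, seg]
  have := measure_cyl_eq_sum μ [] m
  rw [hcyl, measure_univ] at this
  rw [← ENNReal.toReal_sum fun b _ => measure_ne_top μ _]
  simpa using congrArg ENNReal.toReal this.symm

theorem Fintype.sum_ofFn_add {α β : Type*} [Fintype α] [AddCommMonoid β] (a b : ℕ)
    (G : List α → β) :
    ∑ f : Fin (a + b) → α, G (List.ofFn f) =
      ∑ u : Fin a → α, ∑ v : Fin b → α, G (List.ofFn u ++ List.ofFn v) := by
  rw [← Fintype.sum_prod_type', ← (Fin.appendEquiv a b).sum_comp]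
  exact Finset.sum_congr rfl fun x _ => congrArg G (List.ofFn_fin_append x.1 x.2)

lemma List.exists_ofFn_eq {α : Type*} {n : ℕ} (l : List α) (h : l.length = n) :
    ∃ f : Fin n → α, List.ofFn f = l := by
  subst h
  exact ⟨l.get, List.ofFn_get l⟩

lemma List.exists_eq_flatten_append {α : Type*} {n : ℕ} (hn : 0 < n) (l : List α) :
    ∃ (σs : List (Fin n → α)) (τ : List α),
      τ.length < n ∧ l = (σs.map List.ofFn).flatten ++ τ := by
  by_cases hl : l.length < n
  · exact ⟨[], l, hl, by simp⟩
  obtain ⟨σs, τ, hτ, hdrop⟩ := exists_eq_flatten_append hn (l.drop n)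
  obtain ⟨a, htake⟩ := List.exists_ofFn_eq (n := n) (l.take n) (by simp; omega)
  refine ⟨a :: σs, τ, hτ, ?_⟩
  rw [List.map_cons, List.flatten_cons, htake, List.append_assoc, ← hdrop, List.take_append_drop]
termination_by l.length
decreasing_by simp; omega

def IsBlockMultiplicative (n : ℕ) (μ : Measure (ℕ → Bool)) : Prop :=
  ∀ (a : Fin n → Bool) (l : List Bool),
    μ (cyl (List.ofFn a ++ l)) = μ (cyl (List.ofFn a)) * μ (cyl l)

section Block

variable {n : ℕ} {p : (Fin n → Bool) → ℝ} {μ : Measure (ℕ → Bool)} {φ : List Bool → List Bool}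

lemma IsNBlockMap.eq_nil_of_length_lt (hφ : IsNBlockMap n φ) {τ : List Bool} (hτ : τ.length < n) :
    φ τ = [] := by
  simpa using hφ [] τ hτ

lemma IsNBlockMap.ofFn_append (hn : 0 < n) (hφ : IsNBlockMap n φ) (a : Fin n → Bool)
    (l : List Bool) : φ (List.ofFn a ++ l) = φ (List.ofFn a) ++ φ l := by
  obtain ⟨σs, τ, hτ, rfl⟩ := l.exists_eq_flatten_append hn
  have hcons := hφ (a :: σs) τ hτ
  rw [List.map_cons, List.flatten_cons, List.append_assoc] at hcons
  rw [hcons, hφ σs τ hτ, List.map_cons, List.flatten_cons]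

lemma IsNStepBernoulli.measure_cyl_flatten (hμ : IsNStepBernoulli n p μ)
    (σs : List (Fin n → Bool)) :
    μ (cyl (σs.map List.ofFn).flatten) = (σs.map fun f => ENNReal.ofReal (p f)).prod := by
  simpa [← List.ofFn_getElem_eq_map, List.prod_ofFn] using hμ σs.length (fun i => σs[i])

lemma IsNStepBernoulli.measure_cyl_ofFn (hμ : IsNStepBernoulli n p μ) (a : Fin n → Bool) :
    μ (cyl (List.ofFn a)) = ENNReal.ofReal (p a) := by
  simpa using hμ 1 fun _ => a

lemma IsNStepBernoulli.isBlockMultiplicative (hn : 0 < n) (hμ : IsNStepBernoulli n p μ) :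
    IsBlockMultiplicative n μ := by
  intro a l
  obtain ⟨σs, τ, hτ, rfl⟩ := l.exists_eq_flatten_append hn
  rw [measure_cyl_eq_sum μ _ (n - τ.length), measure_cyl_eq_sum μ (_ ++ τ) (n - τ.length),
    Finset.mul_sum]
  refine Finset.sum_congr rfl fun b _ => ?_
  obtain ⟨c, hc⟩ := List.exists_ofFn_eq (n := n) (τ ++ List.ofFn b) (by simp; omega)
  have hflat : (σs.map List.ofFn).flatten ++ τ ++ List.ofFn b =
      ((σs ++ [c]).map List.ofFn).flatten := by
    simp [hc]
  rw [List.append_assoc, hflat, ← List.flatten_cons, ← List.map_cons, hμ.measure_cyl_flatten,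
    hμ.measure_cyl_flatten, hμ.measure_cyl_ofFn, List.map_cons, List.prod_cons]

end Block

noncomputable def expectedLength (φ : List Bool → List Bool) (μ : Measure (ℕ → Bool)) (m : ℕ) :
    ℝ :=
  ∑ f : Fin m → Bool, (μ (cyl (List.ofFn f))).toReal * ((φ (List.ofFn f)).length : ℝ)

lemma avg_eq_expectedLength_div (φ : List Bool → List Bool) (μ : Measure (ℕ → Bool)) (m : ℕ) :
    Avg φ μ m = expectedLength φ μ m / m :=
  one_div_mul_eq_div _ _

section ExpectedLength

variable {n : ℕ} {μ : Measure (ℕ → Bool)} {φ : List Bool → List Bool}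

lemma expectedLength_of_lt (hφ : IsNBlockMap n φ) {m : ℕ} (hm : m < n) :
    expectedLength φ μ m = 0 :=
  Finset.sum_eq_zero fun f _ => by simp [hφ.eq_nil_of_length_lt (τ := List.ofFn f) (by simpa)]

lemma expectedLength_add [IsProbabilityMeasure μ] (hn : 0 < n) (hφ : IsNBlockMap n φ)
    (hμ : IsBlockMultiplicative n μ) (m : ℕ) :
    expectedLength φ μ (n + m) = expectedLength φ μ n + expectedLength φ μ m := by
  have hsplit (u : Fin n → Bool) (v : Fin m → Bool) :
      (μ (cyl (List.ofFn u ++ List.ofFn v))).toReal * ((φ (List.ofFn u ++ List.ofFn v)).length : ℝ)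
        = (μ (cyl (List.ofFn u))).toReal * ((φ (List.ofFn u)).length : ℝ) *
            (μ (cyl (List.ofFn v))).toReal
          + (μ (cyl (List.ofFn u))).toReal *
            ((μ (cyl (List.ofFn v))).toReal * ((φ (List.ofFn v)).length : ℝ)) := by
    rw [hμ, hφ.ofFn_append hn, ENNReal.toReal_mul, List.length_append, Nat.cast_add]
    ring
  refine (Fintype.sum_ofFn_add n m fun l => (μ (cyl l)).toReal * ((φ l).length : ℝ)).trans ?_
  simp only [expectedLength, hsplit, Finset.sum_add_distrib, ← Finset.mul_sum,
    ← Finset.sum_mul, sum_measureReal_cyl_ofFn, mul_one, one_mul]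

lemma expectedLength_eq_div_mul [IsProbabilityMeasure μ] (hn : 0 < n) (hφ : IsNBlockMap n φ)
    (hμ : IsBlockMultiplicative n μ) (m : ℕ) :
    expectedLength φ μ m = (m / n : ℕ) * expectedLength φ μ n := by
  induction m using Nat.strong_induction_on with
  | _ m ih =>
    rcases lt_or_ge m n with hm | hm
    · simp [expectedLength_of_lt hφ hm, Nat.div_eq_of_lt hm]
    obtain ⟨k, rfl⟩ := Nat.exists_eq_add_of_le hm
    rw [expectedLength_add hn hφ hμ, ih k (by omega), Nat.add_div_left _ hn]
    push_cast
    ring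

end ExpectedLength

lemma tendsto_natDiv_div_atTop (n : ℕ) :
    Tendsto (fun m : ℕ => ((m / n : ℕ) : ℝ) / m) atTop (nhds (1 / n)) := by
  have := (tendsto_nat_floor_mul_div_atTop (a := (1 / n : ℝ)) (by positivity)).comp
    tendsto_natCast_atTop_atTop
  refine this.congr fun m => ?_
  simp [← Nat.floor_div_eq_div (K := ℝ), div_eq_inv_mul]

theorem stmt7_general (n : ℕ) (hn : 1 ≤ n) (p : (Fin n → Bool) → ℝ)
    (hp : ∀ f : Fin n → Bool, 0 < p f)
    (μ : Measure (ℕ → Bool)) [IsProbabilityMeasure μ]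
    (hμ : IsNStepBernoulli n p μ)
    (φ : List Bool → List Bool) (hφ : IsNBlockMap n φ) :
    (∀ k : ℕ, 1 ≤ k → Avg φ μ (n * k) = Avg φ μ n) ∧
    limsup (fun m : ℕ => Avg φ μ m) atTop = Avg φ μ n ∧
    Avg φ μ n =
      (1 / n : ℝ) * ∑ f : Fin n → Bool, p f * ((φ (List.ofFn f)).length : ℝ) := by
  have hAvg (m : ℕ) : Avg φ μ m = ((m / n : ℕ) : ℝ) / m * expectedLength φ μ n := by
    rw [avg_eq_expectedLength_div,
      expectedLength_eq_div_mul hn hφ (hμ.isBlockMultiplicative hn), div_mul_eq_mul_div₀]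
  have hAvg_n : Avg φ μ n = 1 / n * expectedLength φ μ n := by
    rw [hAvg, Nat.div_self hn, Nat.cast_one]
  refine ⟨fun k hk => ?_, ?_, ?_⟩
  · rw [hAvg, hAvg_n, Nat.mul_div_cancel_left _ hn, Nat.cast_mul]
    field_simp
  · rw [hAvg_n]
    exact (((tendsto_natDiv_div_atTop n).mul_const _).congr fun m => (hAvg m).symm).limsup_eq
  · rw [Avg]
    congr 1
    refine Finset.sum_congr rfl fun f _ => ?_
    rw [hμ.measure_cyl_ofFn, ENNReal.toReal_ofReal (hp f).le]

/-- For a positive probability vector `p` on `2^n`, the `n`-step Bernoulli measure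
`μ_p`, and a non-trivial `n`-block map `φ`:
`Avg(φ, μ_p, nk) = Avg(φ, μ_p, n)` for all `k ≥ 1`, and
`Rate(φ, μ_p) = limsup_m Avg(φ, μ_p, m) = Avg(φ, μ_p, n) = (1/n) Σ_{σ∈2^n} p(σ)|φ(σ)|`. -/
theorem stmt7 (n : ℕ) (hn : 1 ≤ n) (p : (Fin n → Bool) → ℝ)
    (hp : ∀ f : Fin n → Bool, 0 < p f) (hp1 : ∑ f : Fin n → Bool, p f = 1)
    (μ : Measure (ℕ → Bool)) [IsProbabilityMeasure μ]
    (hμ : IsNStepBernoulli n p μ)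
    (φ : List Bool → List Bool) (hφ : IsNBlockMap n φ)
    (hnt : ∃ f : Fin n → Bool, φ (List.ofFn f) ≠ []) :
    (∀ k : ℕ, 1 ≤ k → Avg φ μ (n * k) = Avg φ μ n) ∧
    limsup (fun m : ℕ => Avg φ μ m) atTop = Avg φ μ n ∧
    Avg φ μ n =
      (1 / n : ℝ) * ∑ f : Fin n → Bool, p f * ((φ (List.ofFn f)).length : ℝ) :=
  stmt7_general n hn p hp μ hμ φ hφ
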